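/- Under the hypotheses of the adjoint error identity for a semi-explicit DAE (true solution (y,z) with ẏ = f(y,z), g(y,z) = 0; approximate solution (Y,Z); adjoint pair (φ^{(y)}, φ^{(z)}) solving the adjoint DAE with data (ψ^y, ψ^z)), if additionally the adjoint terminal condition φ^{(y)}(T) = 0 holds, then the cumulative quantity-of-interest error satisfies ∫₀ᵀ (e^{(y)}, ψ^y) dt + ∫₀ᵀ (e^{(z)}, ψ^z) dt = (φ^{(y)}(0), e^{(y)}(0)) + ∫₀ᵀ (φ^{(y)}, f(Y,Z) - Ẏ) dt + ∫₀ᵀ (φ^{(z)}, g(Y,Z)) dt. -/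

import Mathlib

/-!
Write `f(y,z) - f(Y,Z)` and `g(y,z) - g(Y,Z)` exactly as the averaged Jacobians applied to the
errors `(y - Y, z - Z)`: this is the fundamental theorem of calculus along the segment from `(Y,Z)`
to `(y,z)`. The adjoint equations and `g(y,z) = 0` then make the derivative of `φy ⬝ᵥ (y - Y)`
equal to the residuals of `(Y,Z)` paired with `(φy, φz)` minus the errors paired with `(ψy, ψz)`.
Integrate over `[0,T]` and use `φy T = 0`.
-/

open Matrix MeasureTheory

/-- The averaged Jacobian matrix `∫₀¹ DF(s) (c s) ds`. -/
noncomputable def avgJac {p q : ℕ} (F : ℝ → (Fin p → ℝ) → (Fin q → ℝ))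
    (c : ℝ → Fin p → ℝ) : Matrix (Fin q) (Fin p) ℝ :=
  LinearMap.toMatrix'
    ((∫ s in (0:ℝ)..1, fderiv ℝ (F s) (c s)).toLinearMap)

theorem HasDerivAt.dotProduct {𝕜 ι : Type*} [NontriviallyNormedField 𝕜] [Fintype ι]
    {u v : 𝕜 → ι → 𝕜} {u' v' : ι → 𝕜} {t : 𝕜}
    (hu : HasDerivAt u u' t) (hv : HasDerivAt v v' t) :
    HasDerivAt (fun t => u t ⬝ᵥ v t) (u' ⬝ᵥ v t + u t ⬝ᵥ v') t := by
  simp only [_root_.dotProduct]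
  rw [← Finset.sum_add_distrib]
  exact HasDerivAt.fun_sum fun i _ => (hasDerivAt_pi.1 hu i).fun_mul (hasDerivAt_pi.1 hv i)

section Calculus

variable {E F G : Type*} [NormedAddCommGroup E] [NormedSpace ℝ E] [NormedAddCommGroup F]
  [NormedSpace ℝ F] [NormedAddCommGroup G] [NormedSpace ℝ G]

theorem fderiv_comp_prodMk_left {f : E × F → G} {a : E} {b : F}
    (hf : DifferentiableAt ℝ f (a, b)) :
    fderiv ℝ (fun x => f (x, b)) a = (fderiv ℝ f (a, b)).comp (ContinuousLinearMap.inl ℝ E F) :=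
  (hf.hasFDerivAt.comp a (hasFDerivAt_prodMk_left a b)).fderiv

theorem fderiv_comp_prodMk_right {f : E × F → G} {a : E} {b : F}
    (hf : DifferentiableAt ℝ f (a, b)) :
    fderiv ℝ (fun y => f (a, y)) b = (fderiv ℝ f (a, b)).comp (ContinuousLinearMap.inr ℝ E F) :=
  (hf.hasFDerivAt.comp b (hasFDerivAt_prodMk_right a b)).fderiv

theorem ContDiff.sub_eq_integral_fderiv_lineMap [CompleteSpace F] {f : E → F}
    (hf : ContDiff ℝ 1 f) (a b : E) :
    f b - f a = ∫ s in (0:ℝ)..1, fderiv ℝ f (AffineMap.lineMap a b s) (b - a) := by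
  have hderiv (s : ℝ) : HasDerivAt (fun s => f (AffineMap.lineMap a b s))
      (fderiv ℝ f (AffineMap.lineMap a b s) (b - a)) s :=
    (hf.differentiable one_ne_zero _).hasFDerivAt.comp_hasDerivAt s AffineMap.hasDerivAt_lineMap
  have hcont : Continuous fun s : ℝ => fderiv ℝ f (AffineMap.lineMap a b s) (b - a) :=
    ((hf.continuous_fderiv one_ne_zero).comp AffineMap.lineMap_continuous).clm_apply
      continuous_const
  rw [intervalIntegral.integral_eq_sub_of_hasDerivAt (fun s _ => hderiv s)
    (hcont.intervalIntegrable 0 1)]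
  simp

end Calculus

theorem avgJac_mulVec {p q : ℕ} {F : ℝ → (Fin p → ℝ) → Fin q → ℝ} {c : ℝ → Fin p → ℝ}
    {L : ℝ → (Fin p → ℝ) →L[ℝ] Fin q → ℝ} (hL : Continuous L)
    (hFL : ∀ s, fderiv ℝ (F s) (c s) = L s) (v : Fin p → ℝ) :
    avgJac F c *ᵥ v = ∫ s in (0:ℝ)..1, L s v := by
  simp only [avgJac, hFL]
  rw [← toLin'_apply, toLin'_toMatrix', ContinuousLinearMap.coe_coe,
    ContinuousLinearMap.intervalIntegral_apply (hL.intervalIntegrable 0 1)]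

theorem avgJac_mean_value {p q r : ℕ} {f : (Fin p → ℝ) × (Fin q → ℝ) → Fin r → ℝ}
    (hf : ContDiff ℝ 1 f) (a A : Fin p → ℝ) (b B : Fin q → ℝ) :
    f (a, b) - f (A, B)
      = avgJac (fun s y => f (y, s • b + (1 - s) • B)) (fun s => s • a + (1 - s) • A)
          *ᵥ (a - A)
        + avgJac (fun s z => f (s • a + (1 - s) • A, z)) (fun s => s • b + (1 - s) • B)
          *ᵥ (b - B) := by
  set γ : ℝ → (Fin p → ℝ) × (Fin q → ℝ) := fun s => AffineMap.lineMap (A, B) (a, b) s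
  have hγ (s : ℝ) : γ s = (s • a + (1 - s) • A, s • b + (1 - s) • B) := by
    simp [γ, AffineMap.lineMap_apply_module, add_comm]
  have hdiff (s : ℝ) : DifferentiableAt ℝ f (s • a + (1 - s) • A, s • b + (1 - s) • B) :=
    hf.differentiable one_ne_zero _
  have hcont : Continuous fun s => fderiv ℝ f (γ s) :=
    (hf.continuous_fderiv one_ne_zero).comp AffineMap.lineMap_continuous
  rw [avgJac_mulVec (hcont.clm_comp continuous_const)
      fun s => hγ s ▸ fderiv_comp_prodMk_left (hdiff s),
    avgJac_mulVec (hcont.clm_comp continuous_const)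
      fun s => hγ s ▸ fderiv_comp_prodMk_right (hdiff s),
    ← intervalIntegral.integral_add
      ((hcont.clm_comp continuous_const).clm_apply continuous_const |>.intervalIntegrable 0 1)
      ((hcont.clm_comp continuous_const).clm_apply continuous_const |>.intervalIntegrable 0 1),
    hf.sub_eq_integral_fderiv_lineMap]
  refine intervalIntegral.integral_congr fun s _ => ?_
  simp [γ, ← map_add]

theorem adjoint_lagrange_identity {R ι κ : Type*} [CommRing R] [Fintype ι] [Fintype κ]
    {Fy : Matrix ι ι R} {Fz : Matrix ι κ R} {Gy : Matrix κ ι R} {Gz : Matrix κ κ R}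
    {ey φy ψy fv fV w : ι → R} {ez φz ψz gv gV : κ → R}
    (hf : fv - fV = Fy *ᵥ ey + Fz *ᵥ ez) (hg : gv - gV = Gy *ᵥ ey + Gz *ᵥ ez) (hgv : gv = 0)
    (hadj : Fzᵀ *ᵥ φy + Gzᵀ *ᵥ φz + ψz = 0) :
    -(Fyᵀ *ᵥ φy + Gyᵀ *ᵥ φz + ψy) ⬝ᵥ ey + φy ⬝ᵥ (fv - w)
      = φy ⬝ᵥ (fV - w) + φz ⬝ᵥ gV - (ey ⬝ᵥ ψy + ez ⬝ᵥ ψz) := by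
  have hφf := congrArg (φy ⬝ᵥ ·) hf
  have hφg := congrArg (φz ⬝ᵥ ·) hg
  have hadj_ez := congrArg (· ⬝ᵥ ez) hadj
  simp only [dotProduct_add, dotProduct_sub, add_dotProduct, neg_dotProduct, zero_dotProduct,
    mulVec_transpose, ← dotProduct_mulVec, hgv, dotProduct_zero] at hφf hφg hadj_ez ⊢
  linear_combination hφf + hφg + hadj_ez - dotProduct_comm ψy ey - dotProduct_comm ψz ez

theorem integral_add_integral_eq_of_hasDerivAt {Φ A B C D : ℝ → ℝ} {a b : ℝ} (hab : a ≤ b)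
    (hΦ : ContinuousOn Φ (Set.Icc a b))
    (hderiv : ∀ t ∈ Set.Ioo a b, HasDerivAt Φ (C t + D t - (A t + B t)) t)
    (hA : IntervalIntegrable A volume a b) (hB : IntervalIntegrable B volume a b)
    (hC : IntervalIntegrable C volume a b) (hD : IntervalIntegrable D volume a b) :
    (∫ t in a..b, A t) + (∫ t in a..b, B t)
      = Φ a - Φ b + (∫ t in a..b, C t) + ∫ t in a..b, D t := by
  have hftc := intervalIntegral.integral_eq_sub_of_hasDerivAt_of_le hab hΦ hderiv
    ((hC.add hD).sub (hA.add hB))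
  rw [intervalIntegral.integral_sub (hC.add hD) (hA.add hB), intervalIntegral.integral_add hC hD,
    intervalIntegral.integral_add hA hB] at hftc
  linarith

/-- Adjoint error identity (Lemma `adj_error`) for a semi-explicit DAE. -/
theorem adjoint_dae_cumulative_qoi_error {n m : ℕ} (T : ℝ) (hT : 0 < T)
    (f : (Fin n → ℝ) × (Fin m → ℝ) → (Fin n → ℝ))
    (g : (Fin n → ℝ) × (Fin m → ℝ) → (Fin m → ℝ))
    (hf : ContDiff ℝ 1 f) (hg : ContDiff ℝ 1 g)
    (y Y Y' ψy φy : ℝ → Fin n → ℝ) (z Z ψz φz : ℝ → Fin m → ℝ)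
    (fby : ℝ → Matrix (Fin n) (Fin n) ℝ) (fbz : ℝ → Matrix (Fin n) (Fin m) ℝ)
    (gby : ℝ → Matrix (Fin m) (Fin n) ℝ) (gbz : ℝ → Matrix (Fin m) (Fin m) ℝ)
    -- the averaged Jacobians along the segment between (y,z) and (Y,Z)
    (hfby : ∀ t, fby t = avgJac (fun s y' => f (y', s • z t + (1 - s) • Z t))
      (fun s => s • y t + (1 - s) • Y t))
    (hfbz : ∀ t, fbz t = avgJac (fun s z' => f (s • y t + (1 - s) • Y t, z'))
      (fun s => s • z t + (1 - s) • Z t))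
    (hgby : ∀ t, gby t = avgJac (fun s y' => g (y', s • z t + (1 - s) • Z t))
      (fun s => s • y t + (1 - s) • Y t))
    (hgbz : ∀ t, gbz t = avgJac (fun s z' => g (s • y t + (1 - s) • Y t, z'))
      (fun s => s • z t + (1 - s) • Z t))
    -- the true solution of the DAE
    (hy : ∀ t ∈ Set.Icc (0:ℝ) T, HasDerivAt y (f (y t, z t)) t)
    (hcon : ∀ t ∈ Set.Icc (0:ℝ) T, g (y t, z t) = 0)
    -- the approximate solution and its derivative
    (hY : ∀ t ∈ Set.Icc (0:ℝ) T, HasDerivAt Y (Y' t) t)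
    -- the adjoint DAE
    (hadj1 : ∀ t ∈ Set.Ico (0:ℝ) T,
      HasDerivAt φy (-((fby t)ᵀ *ᵥ φy t + (gby t)ᵀ *ᵥ φz t + ψy t)) t)
    (hadj2 : ∀ t ∈ Set.Ico (0:ℝ) T,
      (fbz t)ᵀ *ᵥ φy t + (gbz t)ᵀ *ᵥ φz t + ψz t = 0)
    -- sufficient smoothness for the integrals and integration by parts
    (hyc : Continuous y) (hYc : Continuous Y) (hY'c : Continuous Y')
    (hzc : Continuous z) (hZc : Continuous Z)
    (hψyc : Continuous ψy) (hψzc : Continuous ψz)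
    (hφyc : Continuous φy) (hφzc : Continuous φz)
    -- adjoint terminal condition
    (hφT : φy T = 0) :
    (∫ t in (0:ℝ)..T, (y t - Y t) ⬝ᵥ ψy t)
      + (∫ t in (0:ℝ)..T, (z t - Z t) ⬝ᵥ ψz t)
    = φy 0 ⬝ᵥ (y 0 - Y 0)
      + (∫ t in (0:ℝ)..T, φy t ⬝ᵥ (f (Y t, Z t) - Y' t))
      + (∫ t in (0:ℝ)..T, φz t ⬝ᵥ g (Y t, Z t)) := by
  have hderiv : ∀ t ∈ Set.Ioo 0 T, HasDerivAt (fun t => φy t ⬝ᵥ (y t - Y t))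
      (φy t ⬝ᵥ (f (Y t, Z t) - Y' t) + φz t ⬝ᵥ g (Y t, Z t)
        - ((y t - Y t) ⬝ᵥ ψy t + (z t - Z t) ⬝ᵥ ψz t)) t := by
    intro t ht
    have htc : t ∈ Set.Icc 0 T := Set.Ioo_subset_Icc_self ht
    have hto : t ∈ Set.Ico 0 T := Set.Ioo_subset_Ico_self ht
    refine ((hadj1 t hto).dotProduct ((hy t htc).sub (hY t htc))).congr_deriv ?_
    refine adjoint_lagrange_identity ?_ ?_ (hcon t htc) (hadj2 t hto)
    · rw [hfby, hfbz]; exact avgJac_mean_value hf _ _ _ _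
    · rw [hgby, hgbz]; exact avgJac_mean_value hg _ _ _ _
  have hfYZ : Continuous fun t => f (Y t, Z t) := hf.continuous.comp (hYc.prodMk hZc)
  have hgYZ : Continuous fun t => g (Y t, Z t) := hg.continuous.comp (hYc.prodMk hZc)
  have key := integral_add_integral_eq_of_hasDerivAt hT.le
    (hφyc.dotProduct (hyc.sub hYc)).continuousOn hderiv
    (((hyc.sub hYc).dotProduct hψyc).intervalIntegrable 0 T)
    (((hzc.sub hZc).dotProduct hψzc).intervalIntegrable 0 T)
    ((hφyc.dotProduct (hfYZ.sub hY'c)).intervalIntegrable 0 T)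
    ((hφzc.dotProduct hgYZ).intervalIntegrable 0 T)
  rwa [hφT, zero_dotProduct, sub_zero] at key
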